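/- Let X be a finite connected simple graph with at least one edge. Then the energy of γ(X) equals the energy of L(X''), i.e., the sum of the absolute values of the adjacency eigenvalues of the symmetric edge graph γ(X) equals the sum of the absolute values of the adjacency eigenvalues of the line graph of the Kronecker double cover X''. -/

import Mathlib

open SimpleGraph

/-- The symmetric edge graph `γ(X)` of a simple graph `X`: its vertices are the darts
(ordered pairs of adjacent vertices) of `X`, and two darts `(u,v)` and `(u',v')` are adjacent
iff (`v = u'` and `u ≠ v'`) or (`v' = u` and `u' ≠ v`). -/
def symEdgeGraph {V : Type*} (X : SimpleGraph V) : SimpleGraph X.Dart where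
  Adj d d' := (d.snd = d'.fst ∧ d.fst ≠ d'.snd) ∨ (d'.snd = d.fst ∧ d'.fst ≠ d.snd)
  symm := ⟨fun d d' h => Or.symm h⟩
  loopless := ⟨by
    rintro d (⟨h1, -⟩ | ⟨h1, -⟩) <;> exact X.loopless.irrefl d.fst (h1 ▸ d.adj)⟩

/-- The Kronecker double cover `X''` of a simple graph `X`: the tensor product `X × K₂`.
Its vertices are pairs `(v, i)` with `v` a vertex of `X` and `i : Bool`, and `(v, i)` is
adjacent to `(w, j)` iff `v` is adjacent to `w` in `X` and `i ≠ j`. -/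
def kroneckerCover {V : Type*} (X : SimpleGraph V) : SimpleGraph (V × Bool) where
  Adj a b := X.Adj a.1 b.1 ∧ a.2 ≠ b.2
  symm := ⟨fun _ _ h => ⟨h.1.symm, h.2.symm⟩⟩
  loopless := ⟨fun _ h => h.2 rfl⟩

instance {V : Type*} [Finite V] (G : SimpleGraph V) : Finite G.Dart :=
  Finite.of_injective _ SimpleGraph.Dart.toProd_injective

/-- The characteristic polynomial `p_G(x) = det(x·I − A(G))` of the adjacency matrix of a
finite simple graph `G`. -/
noncomputable def adjCharpoly {V : Type*} [Finite V] (G : SimpleGraph V) : Polynomial ℝ := by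
  letI := Fintype.ofFinite V
  classical
  exact (G.adjMatrix ℝ).charpoly

/-- The energy of a finite simple graph: the sum of the absolute values of the eigenvalues
(with multiplicity, i.e. the real roots of the characteristic polynomial, which splits since
the adjacency matrix is real symmetric) of its adjacency matrix. -/
noncomputable def energy {V : Type*} [Finite V] (G : SimpleGraph V) : ℝ :=
  ((adjCharpoly G).roots.map fun x => |x|).sum

section Aux
open Polynomial Matrix
set_option linter.unusedSectionVars false
open Polynomial Matrix

variable {ι : Type*} [Fintype ι] [DecidableEq ι]

private lemma charpoly_conj_aux (P Q A : Matrix ι ι ℝ) (hPQ : P * Q = 1) :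
    (P * A * Q).charpoly = A.charpoly := by
  have hPQ' : (C : ℝ →+* ℝ[X]).mapMatrix P * (C : ℝ →+* ℝ[X]).mapMatrix Q = 1 := by
    rw [← _root_.map_mul, hPQ, _root_.map_one]
  have key : (C : ℝ →+* ℝ[X]).mapMatrix P * charmatrix A * (C : ℝ →+* ℝ[X]).mapMatrix Q
      = charmatrix (P * A * Q) := by
    rw [charmatrix, charmatrix, Matrix.mul_sub, Matrix.sub_mul]
    congr 1
    · rw [← (scalar_commute (X : ℝ[X]) (fun r => Commute.all _ _)
        ((C : ℝ →+* ℝ[X]).mapMatrix P)).eq, mul_assoc, hPQ', mul_one]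
    · rw [← _root_.map_mul, ← _root_.map_mul]
  rw [Matrix.charpoly, Matrix.charpoly, ← key, det_mul, det_mul]
  have h1 : ((C : ℝ →+* ℝ[X]).mapMatrix P).det * ((C : ℝ →+* ℝ[X]).mapMatrix Q).det = 1 := by
    rw [← det_mul, hPQ', det_one]
  calc ((C : ℝ →+* ℝ[X]).mapMatrix P).det * (charmatrix A).det
        * ((C : ℝ →+* ℝ[X]).mapMatrix Q).det
      = ((C : ℝ →+* ℝ[X]).mapMatrix P).det * ((C : ℝ →+* ℝ[X]).mapMatrix Q).det
        * (charmatrix A).det := by ring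
    _ = (charmatrix A).det := by rw [h1, one_mul]

private lemma charpoly_diagonal_aux (d : ι → ℝ) :
    (Matrix.diagonal d).charpoly = ∏ i, (X - C (d i)) := by
  have h : charmatrix (Matrix.diagonal d) = Matrix.diagonal (fun i => X - C (d i)) := by
    ext i j
    by_cases h : i = j
    · subst h; simp
    · simp [charmatrix_apply_ne _ _ _ h, Matrix.diagonal_apply_ne _ h]
  rw [Matrix.charpoly, h, det_diagonal]

private lemma roots_prod_aux (f : ι → ℝ) :
    (∏ i, (X - C (f i))).roots = Finset.univ.val.map f := by
  have h : Multiset.map (fun i => X - C (f i)) Finset.univ.val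
      = Multiset.map (fun a => X - C a) (Multiset.map f Finset.univ.val) := by
    rw [Multiset.map_map]; rfl
  rw [Finset.prod_eq_multiset_prod, h, Polynomial.roots_multiset_prod_X_sub_C]

private lemma charpoly_herm_aux (A : Matrix ι ι ℝ) (hA : A.IsHermitian) :
    A.charpoly = ∏ i, (X - C (hA.eigenvalues i)) ∧
    (A * A).charpoly = ∏ i, (X - C (hA.eigenvalues i * hA.eigenvalues i)) := by
  set U : Matrix ι ι ℝ := (Matrix.IsHermitian.eigenvectorUnitary hA : Matrix ι ι ℝ) with hU
  have hst : A = U * Matrix.diagonal hA.eigenvalues * star U := by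
    have := hA.spectral_theorem
    rwa [RCLike.ofReal_real_eq_id, Function.id_comp] at this
  have h1 : U * star U = 1 := (Matrix.mem_unitaryGroup_iff).mp (hA.eigenvectorUnitary).2
  have h2 : star U * U = 1 := (Matrix.mem_unitaryGroup_iff').mp (hA.eigenvectorUnitary).2
  constructor
  · conv_lhs => rw [hst]
    rw [charpoly_conj_aux _ _ _ h1, charpoly_diagonal_aux]
  · have hsq : A * A = U * Matrix.diagonal (fun i => hA.eigenvalues i * hA.eigenvalues i)
        * star U := by
      conv_lhs => rw [hst]
      rw [← Matrix.diagonal_mul_diagonal]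
      simp only [Matrix.mul_assoc]
      rw [show star U * (U * (Matrix.diagonal hA.eigenvalues * star U))
          = Matrix.diagonal hA.eigenvalues * star U by
        rw [← Matrix.mul_assoc, h2, Matrix.one_mul]]
    rw [hsq, charpoly_conj_aux _ _ _ h1, charpoly_diagonal_aux]

private lemma sum_abs_roots_aux (A : Matrix ι ι ℝ) (hA : A.IsHermitian) :
    (A.charpoly.roots.map fun x => |x|).sum = ((A * A).charpoly.roots.map Real.sqrt).sum := by
  obtain ⟨ha, hb⟩ := charpoly_herm_aux A hA
  rw [ha, hb, roots_prod_aux, roots_prod_aux, Multiset.map_map, Multiset.map_map]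
  apply congrArg Multiset.sum
  apply Multiset.map_congr rfl
  intro i _
  simp [Real.sqrt_mul_self_eq_abs]


private lemma adjMatrix_isHermitian {W : Type*} [Fintype W] [DecidableEq W]
    (G : SimpleGraph W) [DecidableRel G.Adj] : Matrix.IsHermitian (G.adjMatrix ℝ) := by
  show (G.adjMatrix ℝ)ᴴ = G.adjMatrix ℝ
  have ht : (G.adjMatrix ℝ)ᴴ = (G.adjMatrix ℝ)ᵀ := by
    ext i j
    rw [Matrix.conjTranspose_apply, Matrix.transpose_apply, star_trivial]
  rw [ht, SimpleGraph.transpose_adjMatrix]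

private lemma adjCharpoly_eq {W : Type*} [Fintype W] [DecidableEq W] (G : SimpleGraph W)
    [DecidableRel G.Adj] : adjCharpoly G = (G.adjMatrix ℝ).charpoly := by
  unfold adjCharpoly
  congr!

end Aux

/-- For a finite connected simple graph `X` with at least one edge, the energy of the symmetric
edge graph `γ(X)` equals the energy of the line graph `L(X'')` of the Kronecker double cover. -/
theorem energy_symEdgeGraph_eq_energy_lineGraph_kroneckerCover {V : Type*} [Finite V]
    (X : SimpleGraph V) (hconn : X.Connected) (hE : X.edgeSet.Nonempty) :
    energy (symEdgeGraph X) = energy (kroneckerCover X).lineGraph := by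
  classical
  letI : Fintype V := Fintype.ofFinite V
  letI : Fintype X.Dart := Fintype.ofFinite _
  letI : Fintype (kroneckerCover X).edgeSet := Fintype.ofFinite _
  set K := kroneckerCover X with hK
  have gadj : ∀ d : X.Dart, s((d.fst, false), (d.snd, true)) ∈ K.edgeSet := by
    intro d
    rw [SimpleGraph.mem_edgeSet]
    exact ⟨d.adj, by simp⟩
  let g : X.Dart → K.edgeSet := fun d => ⟨s((d.fst, false), (d.snd, true)), gadj d⟩
  have ginj : Function.Injective g := by
    intro d d' h
    have h2 := congrArg Subtype.val h
    simp only [g, Sym2.eq_iff, Prod.mk.injEq] at h2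
    rcases h2 with ⟨⟨h3, -⟩, h4, -⟩ | ⟨⟨-, h3⟩, -⟩
    · exact SimpleGraph.Dart.ext _ _ (Prod.ext h3 h4)
    · simp at h3
  have gsurj : Function.Surjective g := by
    rintro ⟨e, he⟩
    revert he
    refine Sym2.ind (fun a b hab => ?_) e
    rw [SimpleGraph.mem_edgeSet] at hab
    obtain ⟨hadj, hne⟩ := hab
    cases ha : a.2 <;> cases hb : b.2
    · rw [ha, hb] at hne; exact absurd rfl hne
    · refine ⟨⟨(a.1, b.1), hadj⟩, ?_⟩
      apply Subtype.ext
      show s((a.1, false), (b.1, true)) = s(a, b)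
      rw [show (a.1, false) = a from Prod.ext rfl ha.symm,
        show (b.1, true) = b from Prod.ext rfl hb.symm]
    · refine ⟨⟨(b.1, a.1), hadj.symm⟩, ?_⟩
      apply Subtype.ext
      show s((b.1, false), (a.1, true)) = s(a, b)
      rw [show (b.1, false) = b from Prod.ext rfl hb.symm,
        show (a.1, true) = a from Prod.ext rfl ha.symm, Sym2.eq_swap]
    · rw [ha, hb] at hne; exact absurd rfl hne
  let f : K.edgeSet ≃ X.Dart := (Equiv.ofBijective g ⟨ginj, gsurj⟩).symm
  let A : Matrix X.Dart X.Dart ℝ := (symEdgeGraph X).adjMatrix ℝ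
  let L : Matrix X.Dart X.Dart ℝ := Matrix.reindex f f (K.lineGraph.adjMatrix ℝ)
  have hadj_iff : ∀ d d' : X.Dart, K.lineGraph.Adj (g d) (g d') ↔
      (symEdgeGraph X).Adj d d'.symm := by
    intro d d'
    constructor
    · rintro ⟨hne, w, hw1, hw2⟩
      have hne' : d ≠ d' := fun h => hne (congrArg g h)
      have hne2 : ¬(d.fst = d'.fst ∧ d.snd = d'.snd) := by
        intro ⟨u, v⟩
        exact hne' (SimpleGraph.Dart.ext _ _ (Prod.ext u v))
      simp only [g, Set.mem_inter_iff, SetLike.mem_coe, Sym2.mem_iff] at hw1 hw2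
      show (d.snd = d'.symm.fst ∧ d.fst ≠ d'.symm.snd) ∨
        (d'.symm.snd = d.fst ∧ d'.symm.fst ≠ d.snd)
      simp only [SimpleGraph.Dart.symm_toProd, Prod.fst_swap, Prod.snd_swap]
      rcases hw1 with h1 | h1 <;> rcases hw2 with h2 | h2 <;>
        rw [h1] at h2 <;> rw [Prod.ext_iff] at h2 <;> simp only [] at h2
      · exact Or.inr ⟨h2.1.symm, fun hh => hne2 ⟨h2.1, hh.symm⟩⟩
      · exact absurd h2.2 (by simp)
      · exact absurd h2.2 (by simp)
      · exact Or.inl ⟨h2.1, fun hh => hne2 ⟨hh, h2.1⟩⟩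
    · rintro (⟨h1, h2⟩ | ⟨h1, h2⟩) <;>
        simp only [SimpleGraph.Dart.symm_toProd, Prod.fst_swap, Prod.snd_swap] at h1 h2
      · refine ⟨fun hh => ?_, (d.snd, true), by simp [g], by simp [g, h1]⟩
        have := congrArg Subtype.val hh
        simp only [g, Sym2.eq_iff, Prod.mk.injEq] at this
        rcases this with ⟨⟨hf, -⟩, -⟩ | ⟨⟨-, hb⟩, -⟩
        · exact h2 hf
        · simp at hb
      · refine ⟨fun hh => ?_, (d.fst, false), by simp [g], by simp [g, h1]⟩
        have := congrArg Subtype.val hh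
        simp only [g, Sym2.eq_iff, Prod.mk.injEq] at this
        rcases this with ⟨-, ⟨hs, -⟩⟩ | ⟨⟨-, hb⟩, -⟩
        · exact h2 hs.symm
        · simp at hb
  have hL : ∀ d d' : X.Dart, L d d' = A d d'.symm := by
    intro d d'
    have hgd : f.symm d = g d := rfl
    show (K.lineGraph.adjMatrix ℝ) (f.symm d) (f.symm d') = A d d'.symm
    rw [hgd, show f.symm d' = g d' from rfl]
    show (if K.lineGraph.Adj (g d) (g d') then (1:ℝ) else 0)
      = if (symEdgeGraph X).Adj d d'.symm then (1:ℝ) else 0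
    by_cases h : K.lineGraph.Adj (g d) (g d')
    · rw [if_pos h, if_pos ((hadj_iff d d').mp h)]
    · rw [if_neg h, if_neg (fun hh => h ((hadj_iff d d').mpr hh))]
  have hAsymm : ∀ d d' : X.Dart, A d.symm d'.symm = A d d' := by
    intro d d'
    show (if (symEdgeGraph X).Adj d.symm d'.symm then (1:ℝ) else 0)
      = if (symEdgeGraph X).Adj d d' then (1:ℝ) else 0
    have : (symEdgeGraph X).Adj d.symm d'.symm ↔ (symEdgeGraph X).Adj d d' := by
      show ((d.symm.snd = d'.symm.fst ∧ d.symm.fst ≠ d'.symm.snd) ∨ _) ↔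
        ((d.snd = d'.fst ∧ d.fst ≠ d'.snd) ∨ _)
      simp only [SimpleGraph.Dart.symm_toProd, Prod.fst_swap, Prod.snd_swap]
      constructor
      · rintro (⟨h1, h2⟩ | ⟨h1, h2⟩)
        · exact Or.inr ⟨h1.symm, fun hh => h2 hh.symm⟩
        · exact Or.inl ⟨h1.symm, fun hh => h2 hh.symm⟩
      · rintro (⟨h1, h2⟩ | ⟨h1, h2⟩)
        · exact Or.inr ⟨h1.symm, fun hh => h2 hh.symm⟩
        · exact Or.inl ⟨h1.symm, fun hh => h2 hh.symm⟩
    by_cases h : (symEdgeGraph X).Adj d d'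
    · rw [if_pos h, if_pos (this.mpr h)]
    · rw [if_neg h, if_neg (fun hh => h (this.mp hh))]
  have hsq : L * L = A * A := by
    ext d d'
    rw [Matrix.mul_apply, Matrix.mul_apply]
    calc ∑ e, L d e * L e d' = ∑ e, A d e.symm * A e d'.symm := by
          refine Finset.sum_congr rfl fun e _ => ?_
          rw [hL, hL]
      _ = ∑ e, A d e * A e.symm d'.symm := by
          refine Fintype.sum_equiv (Function.Involutive.toPerm _ Dart.symm_involutive)
            _ _ fun e => ?_
          simp only [Function.Involutive.coe_toPerm]
          rw [SimpleGraph.Dart.symm_symm]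
      _ = ∑ e, A d e * A e d' := by
          refine Finset.sum_congr rfl fun e _ => ?_
          rw [hAsymm]
  have hAherm : A.IsHermitian := adjMatrix_isHermitian (symEdgeGraph X)
  have hLherm : L.IsHermitian := (adjMatrix_isHermitian K.lineGraph).submatrix _
  have e1 : energy (symEdgeGraph X) = (A.charpoly.roots.map fun x => |x|).sum := by
    rw [energy, adjCharpoly_eq]
  have e2 : energy K.lineGraph = (L.charpoly.roots.map fun x => |x|).sum := by
    rw [energy, adjCharpoly_eq, show L.charpoly = (K.lineGraph.adjMatrix ℝ).charpoly from
      Matrix.charpoly_reindex f _]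
  rw [e1, e2, sum_abs_roots_aux A hAherm, sum_abs_roots_aux L hLherm, hsq]
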